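/- Let P = (X, ≺) be a finite poset with |X| = n elements. Then e(P) · ∏_{x ∈ X} b(x) = n! if and only if every element of X covers at most one element of X (i.e. P is an ordered forest). -/

import Mathlib

/-!
Write `W(P) = e(P) · ∏ₓ b(x)` (`hookWeight`). A linear extension starts with a minimal element
`m`, and the rest of it is a linear extension of `P - m`; hence `e(P) = ∑ₘ e(P - m)` over the
minimal elements. Deleting a minimal element does not change `b(x)` for the remaining elements, so
`W(P) = ∑ₘ b(m) · W(P - m)`. Double counting gives `∑ₘ b(m) = ∑ₓ #{minimal m ≤ x} ≥ n`, with
equality in a forest, where the elements below any `x` form a chain. By induction `W(P) ≥ n!`, with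
equality for forests. If `z` covers `y₁ ≠ y₂`, either two different minimal elements lie below `z`
and the double count is strict, or one minimal element `m` lies below both `y₁` and `y₂`; then
`P - m` is still not a forest and `W(P - m) > (n - 1)!` by induction.
-/

/-- The number of linear extensions of a finite poset `X`: bijections
`f : X ≃ Fin (card X)` such that `x < y` implies `f x < f y`. -/
noncomputable def linExtCount (X : Type*) [Fintype X] [PartialOrder X] : ℕ :=
  Nat.card {f : X ≃ Fin (Fintype.card X) // ∀ ⦃a b : X⦄, a < b → f a < f b}

open Finset

section RemoveZero

variable {X : Type*} [DecidableEq X] {n : ℕ}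

def equivRemoveZero (m : X) : {f : X ≃ Fin (n + 1) // f m = 0} ≃ ({x // x ≠ m} ≃ Fin n) :=
  ((Equiv.equivCongr (Equiv.optionSubtypeNe m).symm (Equiv.refl _)).subtypeEquiv
      fun _ => Iff.rfl).trans <|
    (Equiv.optionSubtype 0).trans (Equiv.equivCongr (Equiv.refl _) (finSuccAboveEquiv 0).symm)

lemma succ_equivRemoveZero_apply (m : X) (f : {f : X ≃ Fin (n + 1) // f m = 0})
    (x : {x // x ≠ m}) : (equivRemoveZero m f x).succ = f.1 x := by
  have succ_symm (w : {y : Fin (n + 1) // y ≠ 0}) : ((finSuccAboveEquiv 0).symm w).succ = w := by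
    have := congrArg Subtype.val ((finSuccAboveEquiv 0).apply_symm_apply w)
    rw [finSuccAboveEquiv_apply] at this
    simpa only [Fin.succAbove_zero] using this
  exact succ_symm _

end RemoveZero

lemma card_subtype_ne {X : Type*} [Fintype X] [DecidableEq X] {n : ℕ}
    (hn : Fintype.card X = n + 1) (m : X) : Fintype.card {x // x ≠ m} = n := by
  simp [hn]

section LinExt

variable {X : Type*} [PartialOrder X] {n : ℕ}

variable (X n) in
def LinExt : Type _ := {f : X ≃ Fin n // StrictMono f}

instance [Finite X] : Finite (LinExt X n) := Subtype.finite

lemma linExtCount_eq_card_linExt [Fintype X] (h : Fintype.card X = n) :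
    linExtCount X = Nat.card (LinExt X n) := by
  subst h; rfl

lemma isMin_of_linExt_apply_eq_zero (f : LinExt X (n + 1)) {m : X} (h : f.1 m = 0) : IsMin m :=
  isMin_iff_forall_not_lt.2 fun _ hy => Fin.not_lt_zero _ (h ▸ f.2 hy)

lemma strictMono_equivRemoveZero_iff [DecidableEq X] {m : X} (hm : IsMin m)
    (f : {f : X ≃ Fin (n + 1) // f m = 0}) :
    StrictMono (equivRemoveZero m f) ↔ StrictMono f.1 := by
  have hf (x : {x // x ≠ m}) := succ_equivRemoveZero_apply m f x
  constructor
  · intro hg a b hab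
    have hb : b ≠ m := fun hbm => hm.not_lt (hbm ▸ hab)
    by_cases ha : a = m
    · rw [ha, f.2, ← hf ⟨b, hb⟩]
      exact Fin.succ_pos _
    · rw [← hf ⟨a, ha⟩, ← hf ⟨b, hb⟩, Fin.succ_lt_succ_iff]
      exact hg hab
  · intro hmono a b hab
    rw [← Fin.succ_lt_succ_iff, hf, hf]
    exact hmono hab

def linExtFiberEquiv [DecidableEq X] {m : X} (hm : IsMin m) :
    {f : LinExt X (n + 1) // f.1 m = 0} ≃ LinExt {x // x ≠ m} n :=
  (Equiv.subtypeSubtypeEquivSubtypeInter _ _).trans <|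
    ((Equiv.subtypeEquivRight fun _ => and_comm).trans
      (Equiv.subtypeSubtypeEquivSubtypeInter _ _).symm).trans <|
    (equivRemoveZero m).subtypeEquiv fun f => (strictMono_equivRemoveZero_iff hm f).symm

open scoped Classical in
theorem card_linExt_succ [Fintype X] :
    Nat.card (LinExt X (n + 1)) = ∑ m : X with IsMin m, Nat.card (LinExt {x // x ≠ m} n) := by
  rw [← Nat.card_congr (Equiv.sigmaFiberEquiv fun f : LinExt X (n + 1) => f.1.symm 0),
    Nat.card_sigma (α := X) (β := fun m => {f : LinExt X (n + 1) // f.1.symm 0 = m}), sum_filter]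
  refine sum_congr rfl fun m _ => ?_
  have hfiber : {f : LinExt X (n + 1) // f.1.symm 0 = m} ≃ {f : LinExt X (n + 1) // f.1 m = 0} :=
    Equiv.subtypeEquivRight fun f => f.1.symm_apply_eq.trans eq_comm
  rw [Nat.card_congr hfiber]
  split_ifs with hm
  · exact Nat.card_congr (linExtFiberEquiv hm)
  · have : IsEmpty {f : LinExt X (n + 1) // f.1 m = 0} :=
      ⟨fun f => hm (isMin_of_linExt_apply_eq_zero f.1 f.2)⟩
    exact Nat.card_of_isEmpty

open scoped Classical in
theorem linExtCount_eq_sum_isMin [Fintype X] [Nonempty X] :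
    linExtCount X = ∑ m : X with IsMin m, linExtCount {x // x ≠ m} := by
  obtain ⟨n, hn⟩ := Nat.exists_eq_succ_of_ne_zero (Fintype.card_ne_zero (α := X))
  rw [linExtCount_eq_card_linExt hn, card_linExt_succ]
  refine sum_congr rfl fun m _ => (linExtCount_eq_card_linExt ?_).symm
  simp [hn]

end LinExt

section HookWeight

variable {X : Type*} [PartialOrder X]

variable (X) in
noncomputable def hookWeight [Fintype X] : ℕ :=
  linExtCount X * ∏ x : X, Nat.card {y : X // x ≤ y}

lemma hookWeight_of_isEmpty [Fintype X] [IsEmpty X] : hookWeight X = 1 := by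
  have : Unique (LinExt X 0) := ⟨⟨⟨Equiv.equivOfIsEmpty X (Fin 0), isEmptyElim⟩⟩,
    fun f => Subtype.ext (Equiv.ext isEmptyElim)⟩
  rw [hookWeight, linExtCount_eq_card_linExt Fintype.card_eq_zero, Nat.card_unique,
    univ_eq_empty, prod_empty, mul_one]

lemma card_Ici_subtype_ne {m : X} (hm : IsMin m) (x : {x // x ≠ m}) :
    Nat.card {y : {x // x ≠ m} // x ≤ y} = Nat.card {y : X // x.1 ≤ y} :=
  Nat.card_congr
    { toFun y := ⟨y.1, y.2⟩
      invFun y := ⟨⟨y.1, fun hym => x.2 (hm.eq_of_le (y.2.trans_eq hym))⟩, y.2⟩ }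

open scoped Classical in
theorem hookWeight_eq_sum_isMin [Fintype X] [Nonempty X] :
    hookWeight X = ∑ m : X with IsMin m, Nat.card {y : X // m ≤ y} * hookWeight {x // x ≠ m} := by
  rw [hookWeight, linExtCount_eq_sum_isMin, sum_mul]
  refine sum_congr rfl fun m hm => ?_
  rw [hookWeight, Fintype.prod_eq_mul_prod_subtype_ne _ m,
    Fintype.prod_congr _ (fun x => Nat.card {y : {x // x ≠ m} // x ≤ y})
      fun x => (card_Ici_subtype_ne (mem_filter.1 hm).2 x).symm]
  ring

end HookWeight

section Forest

variable {X : Type*} [PartialOrder X]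

variable (X) in
def IsForest : Prop := ∀ z y₁ y₂ : X, y₁ ⋖ z → y₂ ⋖ z → y₁ = y₂

lemma covBy_subtype_ne_iff {m : X} (hm : IsMin m) {a b : {x // x ≠ m}} :
    a ⋖ b ↔ (a : X) ⋖ b :=
  (Set.OrdConnected.apply_covBy_apply_iff (OrderEmbedding.subtype (· ≠ m)) (by
    rw [OrderEmbedding.coe_subtype, Subtype.range_coe_subtype]
    exact IsUpperSet.ordConnected fun a b hab ha hb => ha (hm.eq_of_le (hab.trans_eq hb)))).symm

lemma IsForest.subtype_ne (h : IsForest X) {m : X} (hm : IsMin m) : IsForest {x // x ≠ m} :=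
  fun z y₁ y₂ h₁ h₂ => Subtype.ext <|
    h z y₁ y₂ ((covBy_subtype_ne_iff hm).1 h₁) ((covBy_subtype_ne_iff hm).1 h₂)

lemma not_isForest_subtype_ne {m y₁ y₂ z : X} (hm : IsMin m) (h₁ : y₁ ⋖ z) (h₂ : y₂ ⋖ z)
    (hne : y₁ ≠ y₂) (hy₁ : m ≤ y₁) (hy₂ : m ≤ y₂) : ¬ IsForest {x // x ≠ m} := by
  have hy₁m : y₁ ≠ m := by
    rintro rfl
    exact h₁.2 (hy₂.lt_of_ne hne) h₂.lt
  have hy₂m : y₂ ≠ m := by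
    rintro rfl
    exact h₂.2 (hy₁.lt_of_ne hne.symm) h₁.lt
  have hzm : z ≠ m := (hy₁.trans_lt h₁.lt).ne'
  intro hF
  exact hne <| congrArg Subtype.val <| hF ⟨z, hzm⟩ ⟨y₁, hy₁m⟩ ⟨y₂, hy₂m⟩
    ((covBy_subtype_ne_iff hm).2 h₁) ((covBy_subtype_ne_iff hm).2 h₂)

lemma IsForest.le_total_of_le [Finite X] (h : IsForest X) {a b x : X} (ha : a ≤ x) (hb : b ≤ x) :
    a ≤ b ∨ b ≤ a := by
  classical
  have : Fintype X := Fintype.ofFinite X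
  let := Fintype.toLocallyFiniteOrder (α := X)
  induction x using WellFoundedLT.induction with
  | ind x ih =>
    obtain rfl | hax := ha.eq_or_lt
    · exact .inr hb
    obtain rfl | hbx := hb.eq_or_lt
    · exact .inl ha
    obtain ⟨c, hac, hcx⟩ := exists_le_covBy_of_lt hax
    obtain ⟨d, hbd, hdx⟩ := exists_le_covBy_of_lt hbx
    exact ih c hcx.lt hac (h x c d hcx hdx ▸ hbd)

lemma IsForest.eq_of_isMin_of_le [Finite X] (h : IsForest X) {x m₁ m₂ : X} (h₁ : IsMin m₁)
    (h₂ : IsMin m₂) (hx₁ : m₁ ≤ x) (hx₂ : m₂ ≤ x) : m₁ = m₂ :=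
  (h.le_total_of_le hx₁ hx₂).elim h₂.eq_of_le (fun h => (h₁.eq_of_le h).symm)

lemma exists_isMin_le [Finite X] (x : X) : ∃ m, IsMin m ∧ m ≤ x := by
  obtain ⟨m, hmx, hm⟩ := exists_minimal_le_of_wellFoundedLT (fun _ : X => True) x trivial
  exact ⟨m, minimal_true.1 hm, hmx⟩

end Forest

section MinimalCount

variable {X : Type*} [PartialOrder X] [Fintype X]

open scoped Classical

lemma sum_card_Ici_isMin :
    ∑ m : X with IsMin m, Nat.card {y : X // m ≤ y} = ∑ x : X, #{m | IsMin m ∧ m ≤ x} := by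
  have := sum_card_bipartiteAbove_eq_sum_card_bipartiteBelow (s := {m : X | IsMin m})
    (t := univ) (r := (· ≤ ·))
  simp only [bipartiteAbove, bipartiteBelow, filter_filter] at this
  rw [← this]
  exact sum_congr rfl fun m _ => by rw [Nat.card_eq_fintype_card, Fintype.card_subtype]

lemma nonempty_isMin_le (x : X) : ({m | IsMin m ∧ m ≤ x} : Finset X).Nonempty := by
  obtain ⟨m, hm, hmx⟩ := exists_isMin_le x
  exact ⟨m, mem_filter.2 ⟨mem_univ m, hm, hmx⟩⟩

lemma card_le_sum_card_Ici_isMin :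
    Fintype.card X ≤ ∑ m : X with IsMin m, Nat.card {y : X // m ≤ y} := by
  rw [sum_card_Ici_isMin, Fintype.card_eq_sum_ones]
  exact sum_le_sum fun x _ => one_le_card.2 (nonempty_isMin_le x)

lemma card_lt_sum_card_Ici_isMin {z m₁ m₂ : X} (h₁ : IsMin m₁) (h₂ : IsMin m₂) (hz₁ : m₁ ≤ z)
    (hz₂ : m₂ ≤ z) (hne : m₁ ≠ m₂) :
    Fintype.card X < ∑ m : X with IsMin m, Nat.card {y : X // m ≤ y} := by
  rw [sum_card_Ici_isMin, Fintype.card_eq_sum_ones]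
  refine sum_lt_sum (fun x _ => one_le_card.2 (nonempty_isMin_le x))
    ⟨z, mem_univ z, one_lt_card.2 ⟨m₁, by simp [h₁, hz₁], m₂, by simp [h₂, hz₂], hne⟩⟩

lemma factorial_succ_le_sum_card_Ici_isMin_mul {n : ℕ} (hn : Fintype.card X = n + 1) :
    (n + 1).factorial ≤ ∑ m : X with IsMin m, Nat.card {y : X // m ≤ y} * n.factorial := by
  rw [← sum_mul, Nat.factorial_succ]
  gcongr
  exact hn ▸ card_le_sum_card_Ici_isMin

lemma IsForest.sum_card_Ici_isMin (h : IsForest X) :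
    ∑ m : X with IsMin m, Nat.card {y : X // m ≤ y} = Fintype.card X := by
  rw [_root_.sum_card_Ici_isMin, Fintype.card_eq_sum_ones]
  refine sum_congr rfl fun x _ => card_eq_one.2 ?_
  obtain ⟨m, hm, hmx⟩ := exists_isMin_le x
  refine ⟨m, eq_singleton_iff_unique_mem.2 ⟨by simp [hm, hmx], fun m' hm' => ?_⟩⟩
  simp only [mem_filter, mem_univ, true_and] at hm'
  exact h.eq_of_isMin_of_le hm'.1 hm hm'.2 hmx

end MinimalCount

section Main

open scoped Classical

theorem factorial_le_hookWeight (X : Type*) [Fintype X] [PartialOrder X] :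
    (Fintype.card X).factorial ≤ hookWeight X := by
  induction hn : Fintype.card X generalizing X with
  | zero =>
    have := Fintype.card_eq_zero_iff.1 hn
    rw [hookWeight_of_isEmpty]; rfl
  | succ n ih =>
    have : Nonempty X := Fintype.card_pos_iff.1 (hn ▸ n.succ_pos)
    calc (n + 1).factorial
        ≤ ∑ m : X with IsMin m, Nat.card {y : X // m ≤ y} * n.factorial :=
          factorial_succ_le_sum_card_Ici_isMin_mul hn
      _ ≤ ∑ m : X with IsMin m, Nat.card {y : X // m ≤ y} * hookWeight {x // x ≠ m} := by
        gcongr with m; exact ih _ (card_subtype_ne hn m)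
      _ = hookWeight X := hookWeight_eq_sum_isMin.symm

theorem IsForest.hookWeight_eq_factorial {X : Type*} [Fintype X] [PartialOrder X]
    (h : IsForest X) : hookWeight X = (Fintype.card X).factorial := by
  induction hn : Fintype.card X generalizing X with
  | zero =>
    have := Fintype.card_eq_zero_iff.1 hn
    exact hookWeight_of_isEmpty
  | succ n ih =>
    have : Nonempty X := Fintype.card_pos_iff.1 (hn ▸ n.succ_pos)
    calc hookWeight X
        = ∑ m : X with IsMin m, Nat.card {y : X // m ≤ y} * n.factorial := by
          rw [hookWeight_eq_sum_isMin]
          refine sum_congr rfl fun m hm => ?_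
          rw [ih (h.subtype_ne (mem_filter.1 hm).2) (card_subtype_ne hn m)]
      _ = (n + 1).factorial := by
        rw [← sum_mul, h.sum_card_Ici_isMin, hn, Nat.factorial_succ]

theorem factorial_lt_hookWeight {X : Type*} [Fintype X] [PartialOrder X] (h : ¬ IsForest X) :
    (Fintype.card X).factorial < hookWeight X := by
  induction hn : Fintype.card X generalizing X with
  | zero =>
    have := Fintype.card_eq_zero_iff.1 hn
    exact absurd (fun z => isEmptyElim z) h
  | succ n ih =>
    have : Nonempty X := Fintype.card_pos_iff.1 (hn ▸ n.succ_pos)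
    obtain ⟨z, y₁, y₂, h₁, h₂, hne⟩ : ∃ z y₁ y₂ : X, y₁ ⋖ z ∧ y₂ ⋖ z ∧ y₁ ≠ y₂ := by
      simpa [IsForest] using h
    obtain ⟨m₁, hm₁, hmy₁⟩ := exists_isMin_le y₁
    obtain ⟨m₂, hm₂, hmy₂⟩ := exists_isMin_le y₂
    have hle (m : X) : n.factorial ≤ hookWeight {x // x ≠ m} :=
      card_subtype_ne hn m ▸ factorial_le_hookWeight _
    rw [hookWeight_eq_sum_isMin]
    by_cases hm : m₁ = m₂
    · subst hm
      have hlt : n.factorial < hookWeight {x // x ≠ m₁} :=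
        ih (not_isForest_subtype_ne hm₁ h₁ h₂ hne hmy₁ hmy₂) (card_subtype_ne hn m₁)
      calc (n + 1).factorial
          ≤ ∑ m : X with IsMin m, Nat.card {y : X // m ≤ y} * n.factorial :=
            factorial_succ_le_sum_card_Ici_isMin_mul hn
        _ < _ := by
          refine sum_lt_sum (fun m _ => by gcongr; exact hle m) ⟨m₁, by simpa using hm₁, ?_⟩
          exact Nat.mul_lt_mul_of_pos_left hlt <|
            have : Nonempty {y // m₁ ≤ y} := ⟨⟨m₁, le_rfl⟩⟩
            Nat.card_pos
    · calc (n + 1).factorial = (n + 1) * n.factorial := Nat.factorial_succ n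
        _ < ∑ m : X with IsMin m, Nat.card {y : X // m ≤ y} * n.factorial := by
          rw [← sum_mul]
          gcongr
          exact hn ▸ card_lt_sum_card_Ici_isMin hm₁ hm₂ (hmy₁.trans h₁.le) (hmy₂.trans h₂.le) hm
        _ ≤ _ := by gcongr with m; exact hle m

end Main

/-- Equality in the Björner–Wachs inequality holds if and only if every element
of the poset covers at most one element (i.e. `P` is an ordered forest). -/
theorem bjorner_wachs_equality (X : Type*) [Fintype X] [PartialOrder X] :
    linExtCount X * ∏ x : X, Nat.card {y : X // x ≤ y} =
      Nat.factorial (Fintype.card X) ↔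
    ∀ z y₁ y₂ : X, y₁ ⋖ z → y₂ ⋖ z → y₁ = y₂ := by
  refine ⟨fun h => ?_, IsForest.hookWeight_eq_factorial⟩
  by_contra hF
  exact (factorial_lt_hookWeight hF).ne' h
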